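/- Set C₂ = max{4C₁, (R₁C₀/2)²} and R₂ = 2C₀⁻¹√C₂ (so R₂ ≥ R₁). For each ξ with |ξ| > R₂ there exists s ∈ (0, s₁), s₁ := C₀R₂/C₂, such that s = 1/λ²(|ξ|,s), i.e. s·λ²(|ξ|,s) = 1, where λ²(|ξ|,s) := −μ(s;|ξ|) > 0. -/

import Mathlib

open MeasureTheory Real Set Filter

/-- A barotropic pressure law `p ∈ C^∞((0,∞))`, nonnegative, strictly increasing,
with derivative `dp` and `1/p'` locally bounded on `(0,∞)`. -/
structure PressureLaw where
  p : ℝ → ℝ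
  dp : ℝ → ℝ
  smooth : ContDiffOn ℝ (⊤ : ℕ∞) p (Set.Ioi 0)
  nonneg : ∀ z ∈ Set.Ioi (0 : ℝ), 0 ≤ p z
  strictMono : StrictMonoOn p (Set.Ioi 0)
  hasDeriv : ∀ z ∈ Set.Ioi (0 : ℝ), HasDerivAt p (dp z) z
  dp_pos : ∀ z ∈ Set.Ioi (0 : ℝ), 0 < dp z
  inv_dp_locBdd : ∀ K : Set ℝ, IsCompact K → K ⊆ Set.Ioi 0 → ∃ C, ∀ z ∈ K, 1 / dp z ≤ C

/-- The Rayleigh–Taylor steady state `ρ₀` on `(-m, l)`: positive, bounded above and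
below by positive constants, smooth on `(-m,0)` and `(0,l)`, solving
`(p±(ρ₀))' = -g ρ₀` on the respective subinterval, with matching pressures and a
positive density jump `⟦ρ₀⟧ = ρ₀(0⁺) - ρ₀(0⁻) > 0` at the interface. -/
structure SteadyState (m l g : ℝ) (Pp Pm : PressureLaw) where
  ρ : ℝ → ℝ
  dρ : ℝ → ℝ
  lb : ℝ
  ub : ℝ
  lb_pos : 0 < lb
  bounds : ∀ x ∈ Set.Ioo (-m) l, lb ≤ ρ x ∧ ρ x ≤ ub
  smooth_neg : ContDiffOn ℝ (⊤ : ℕ∞) ρ (Set.Ioo (-m) 0)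
  smooth_pos : ContDiffOn ℝ (⊤ : ℕ∞) ρ (Set.Ioo 0 l)
  deriv_neg : ∀ x ∈ Set.Ioo (-m) 0, HasDerivAt ρ (dρ x) x
  deriv_pos : ∀ x ∈ Set.Ioo 0 l, HasDerivAt ρ (dρ x) x
  ode_neg : ∀ x ∈ Set.Ioo (-m) 0, Pm.dp (ρ x) * dρ x = -(g * ρ x)
  ode_pos : ∀ x ∈ Set.Ioo 0 l, Pp.dp (ρ x) * dρ x = -(g * ρ x)
  ρplus : ℝ
  ρminus : ℝ
  lim_plus : Filter.Tendsto ρ (nhdsWithin 0 (Set.Ioi 0)) (nhds ρplus)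
  lim_minus : Filter.Tendsto ρ (nhdsWithin 0 (Set.Iio 0)) (nhds ρminus)
  pressure_eq : Pp.p ρplus = Pm.p ρminus
  jump_pos : 0 < ρplus - ρminus

/-- `x ↦ p'(ρ₀(x))`, using `p₋` below the interface and `p₊` above it. -/
noncomputable def SteadyState.pd {m l g : ℝ} {Pp Pm : PressureLaw}
    (S : SteadyState m l g Pp Pm) (x : ℝ) : ℝ :=
  if x < 0 then Pm.dp (S.ρ x) else Pp.dp (S.ρ x)

/-- The density jump `⟦ρ₀⟧` at the interface. -/
noncomputable def SteadyState.jump {m l g : ℝ} {Pp Pm : PressureLaw}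
    (S : SteadyState m l g Pp Pm) : ℝ := S.ρplus - S.ρminus

/-- The energy `E(φ, ψ; s)` with spatial frequency `ξa = |ξ|`, rotation speed `ω`,
parameter `s`, where `dψ` denotes the derivative `ψ'`. -/
noncomputable def Een {m l g : ℝ} {Pp Pm : PressureLaw} (S : SteadyState m l g Pp Pm)
    (ω ξa s : ℝ) (φ ψ dψ : ℝ → ℝ) : ℝ :=
  (1 / 2) * ∫ x in Set.Ioo (-m) l,
    (S.pd x * S.ρ x * (dψ x + ξa * φ x) ^ 2 - 2 * g * ξa * S.ρ x * ψ x * φ x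
      + 4 * ω ^ 2 * s * S.ρ x * (φ x) ^ 2)

/-- `J(φ, ψ) = ½∫ ρ₀ (φ² + ψ²)`. -/
noncomputable def Jen {m l g : ℝ} {Pp Pm : PressureLaw} (S : SteadyState m l g Pp Pm)
    (φ ψ : ℝ → ℝ) : ℝ :=
  (1 / 2) * ∫ x in Set.Ioo (-m) l, S.ρ x * ((φ x) ^ 2 + (ψ x) ^ 2)

/-- Membership `(φ, ψ) ∈ L²(-m,l) × H₀¹(-m,l)`, where `dψ` is the derivative of `ψ`. -/
structure MemAdm (m l : ℝ) (φ ψ dψ : ℝ → ℝ) : Prop where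
  φ_mem : MemLp φ 2 (volume.restrict (Set.Ioo (-m) l))
  ψ_cont : ContinuousOn ψ (Set.Icc (-m) l)
  ψ_deriv : ∀ x ∈ Set.Ioo (-m) l, HasDerivAt ψ (dψ x) x
  ψ_mem : MemLp ψ 2 (volume.restrict (Set.Ioo (-m) l))
  dψ_mem : MemLp dψ 2 (volume.restrict (Set.Ioo (-m) l))
  bc_left : ψ (-m) = 0
  bc_right : ψ l = 0

/-- `μ(s) = μ(s; |ξ|) = inf_{(φ,ψ) ∈ 𝒜} E(φ, ψ; s)`. -/
noncomputable def muInf {m l g : ℝ} {Pp Pm : PressureLaw} (S : SteadyState m l g Pp Pm)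
    (ω ξa s : ℝ) : ℝ :=
  sInf {e : ℝ | ∃ φ ψ dψ : ℝ → ℝ, MemAdm m l φ ψ dψ ∧ Jen S φ ψ = 1 ∧
    e = Een S ω ξa s φ ψ dψ}

lemma PressureLaw.dp_contOn (P : PressureLaw) : ContinuousOn P.dp (Set.Ioi 0) := by
  have h : ContinuousOn (derivWithin P.p (Set.Ioi 0)) (Set.Ioi 0) :=
    P.smooth.continuousOn_derivWithin isOpen_Ioi.uniqueDiffOn (by simp)
  refine h.congr fun z hz => ?_
  exact ((P.hasDeriv z hz).hasDerivWithinAt.derivWithin (isOpen_Ioi.uniqueDiffOn z hz)).symm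

lemma l2_mul_int {μ : Measure ℝ} {f g : ℝ → ℝ} (hf : MemLp f 2 μ) (hg : MemLp g 2 μ) :
    Integrable (fun x => f x * g x) μ := by
  have h : Integrable (fun x => f x ^ 2 + g x ^ 2) μ := hf.integrable_sq.add hg.integrable_sq
  refine h.mono' (hf.aestronglyMeasurable.mul hg.aestronglyMeasurable) (ae_of_all _ fun x => ?_)
  simp only [Real.norm_eq_abs, abs_mul]
  nlinarith [sq_nonneg (|f x| - |g x|), sq_abs (f x), sq_abs (g x), abs_nonneg (f x),
    abs_nonneg (g x)]

lemma cont_memL2 {f : ℝ → ℝ} (hf : Continuous f) (a b : ℝ) :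
    MemLp f 2 (volume.restrict (Set.Ioo a b)) := by
  haveI : IsFiniteMeasure (volume.restrict (Set.Ioo a b)) :=
    ⟨by rw [Measure.restrict_apply_univ]; exact measure_Ioo_lt_top⟩
  obtain ⟨C, hC⟩ := isCompact_Icc.exists_bound_of_continuousOn (hf.continuousOn (s := Set.Icc a b))
  exact MemLp.of_bound hf.aestronglyMeasurable C
    ((ae_restrict_iff' measurableSet_Ioo).mpr (ae_of_all _ fun x hx => hC x ⟨hx.1.le, hx.2.le⟩))

section Meas

variable {m l g : ℝ} {Pp Pm : PressureLaw} (S : SteadyState m l g Pp Pm)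

lemma restrict_split (hm : 0 < m) (hl : 0 < l) :
    volume.restrict (Set.Ioo (-m) l)
      = volume.restrict (Set.Ioo (-m) 0) + volume.restrict (Set.Ioo 0 l) := by
  have hdisj : Disjoint (Set.Ioo (-m) (0:ℝ)) (Set.Ioo (0:ℝ) l) :=
    Set.disjoint_left.mpr fun x hx hx' => absurd (hx.2.trans hx'.1) (lt_irrefl x)
  have h1 : Set.Ioo (-m) l =ᵐ[volume] (Set.Ioo (-m) 0 ∪ Set.Ioo 0 l : Set ℝ) := by
    rw [MeasureTheory.ae_eq_set]
    constructor
    · refine measure_mono_null (fun x hx => ?_) (volume_singleton (a := (0:ℝ)))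
      obtain ⟨⟨h1, h2⟩, h3⟩ := hx
      by_contra hx0
      rcases lt_or_gt_of_ne hx0 with h | h
      · exact h3 (Or.inl ⟨h1, h⟩)
      · exact h3 (Or.inr ⟨h, h2⟩)
    · refine measure_mono_null (fun x hx => ?_) (measure_empty (μ := volume))
      obtain ⟨h12, h3⟩ := hx
      rcases h12 with ⟨h1, h2⟩ | ⟨h1, h2⟩
      · exact h3 ⟨h1, h2.trans hl⟩
      · exact h3 ⟨(neg_lt_zero.mpr hm).trans h1, h2⟩
  rw [Measure.restrict_congr_set h1, Measure.restrict_union hdisj measurableSet_Ioo]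

lemma rho_aesm (hm : 0 < m) (hl : 0 < l) :
    AEStronglyMeasurable S.ρ (volume.restrict (Set.Ioo (-m) l)) := by
  rw [restrict_split hm hl]
  exact aestronglyMeasurable_add_measure_iff.mpr
    ⟨(S.smooth_neg.continuousOn).aestronglyMeasurable measurableSet_Ioo,
     (S.smooth_pos.continuousOn).aestronglyMeasurable measurableSet_Ioo⟩

lemma rho_ae_bd : ∀ᵐ x ∂(volume.restrict (Set.Ioo (-m) l)), S.lb ≤ S.ρ x ∧ S.ρ x ≤ S.ub :=
  (ae_restrict_iff' measurableSet_Ioo).mpr (ae_of_all _ S.bounds)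

lemma pd_aesm (hm : 0 < m) (hl : 0 < l) :
    AEStronglyMeasurable S.pd (volume.restrict (Set.Ioo (-m) l)) := by
  rw [restrict_split hm hl]
  rw [aestronglyMeasurable_add_measure_iff]
  constructor
  · have hmap : Set.MapsTo S.ρ (Set.Ioo (-m) 0) (Set.Ioi 0) := fun x hx =>
      lt_of_lt_of_le S.lb_pos (S.bounds x ⟨hx.1, hx.2.trans hl⟩).1
    have hc : ContinuousOn (fun x => Pm.dp (S.ρ x)) (Set.Ioo (-m) 0) :=
      Pm.dp_contOn.comp S.smooth_neg.continuousOn hmap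
    refine (hc.aestronglyMeasurable measurableSet_Ioo).congr ?_
    refine (ae_restrict_iff' measurableSet_Ioo).mpr (ae_of_all _ fun x hx => ?_)
    simp [SteadyState.pd, if_pos hx.2]
  · have hmap : Set.MapsTo S.ρ (Set.Ioo 0 l) (Set.Ioi 0) := fun x hx =>
      lt_of_lt_of_le S.lb_pos (S.bounds x ⟨(neg_lt_zero.mpr hm).trans hx.1, hx.2⟩).1
    have hc : ContinuousOn (fun x => Pp.dp (S.ρ x)) (Set.Ioo 0 l) :=
      Pp.dp_contOn.comp S.smooth_pos.continuousOn hmap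
    refine (hc.aestronglyMeasurable measurableSet_Ioo).congr ?_
    refine (ae_restrict_iff' measurableSet_Ioo).mpr (ae_of_all _ fun x hx => ?_)
    simp [SteadyState.pd, if_neg (not_lt.mpr hx.1.le)]

lemma pd_ae_bd (hm : 0 < m) (hl : 0 < l) :
    ∃ M : ℝ, 0 ≤ M ∧ ∀ᵐ x ∂(volume.restrict (Set.Ioo (-m) l)), 0 ≤ S.pd x ∧ S.pd x ≤ M := by
  have hsub : Set.Icc S.lb S.ub ⊆ Set.Ioi 0 := fun z hz => lt_of_lt_of_le S.lb_pos hz.1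
  obtain ⟨Cp, hCp⟩ := isCompact_Icc.exists_bound_of_continuousOn (Pp.dp_contOn.mono hsub)
  obtain ⟨Cm, hCm⟩ := isCompact_Icc.exists_bound_of_continuousOn (Pm.dp_contOn.mono hsub)
  refine ⟨max (max Cp Cm) 0, le_max_right _ _,
    (ae_restrict_iff' measurableSet_Ioo).mpr (ae_of_all _ fun x hx => ?_)⟩
  have hρ := S.bounds x hx
  have hρpos : S.ρ x ∈ Set.Ioi (0:ℝ) := lt_of_lt_of_le S.lb_pos hρ.1
  unfold SteadyState.pd
  split
  · refine ⟨(Pm.dp_pos _ hρpos).le, ?_⟩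
    calc Pm.dp (S.ρ x) ≤ |Pm.dp (S.ρ x)| := le_abs_self _
      _ ≤ Cm := by simpa [Real.norm_eq_abs] using hCm _ ⟨hρ.1, hρ.2⟩
      _ ≤ _ := le_trans (le_max_right _ _) (le_max_left _ _)
  · refine ⟨(Pp.dp_pos _ hρpos).le, ?_⟩
    calc Pp.dp (S.ρ x) ≤ |Pp.dp (S.ρ x)| := le_abs_self _
      _ ≤ Cp := by simpa [Real.norm_eq_abs] using hCp _ ⟨hρ.1, hρ.2⟩
      _ ≤ _ := le_trans (le_max_left _ _) (le_max_left _ _)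

end Meas

section Master

variable {m l g : ℝ} {Pp Pm : PressureLaw} (S : SteadyState m l g Pp Pm)

/-- Master decomposition of the energy with all estimates. -/
lemma master (hm : 0 < m) (hl : 0 < l) (hg : 0 < g) (ω ξa : ℝ)
    {φ ψ dψ : ℝ → ℝ} (hA : MemAdm m l φ ψ dψ) (hJ : Jen S φ ψ = 1) :
    ∃ IA IB IC : ℝ, 0 ≤ IA ∧ |IB| ≤ 1 ∧ 0 ≤ IC ∧ IC ≤ 2 ∧
      ∀ s, Een S ω ξa s φ ψ dψ = (1/2) * (IA - 2*g*ξa*IB + 4*ω^2*s*IC) := by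
  have hρm := rho_aesm S hm hl
  have hρb := rho_ae_bd S
  obtain ⟨M, hM0, hpdb⟩ := pd_ae_bd S hm hl
  have hpdm := pd_aesm S hm hl
  have hq : MemLp (fun x => dψ x + ξa * φ x) 2 (volume.restrict (Set.Ioo (-m) l)) := by
    have := hA.dψ_mem.add (hA.φ_mem.const_mul ξa); exact this
  have hIA_int : Integrable (fun x => S.pd x * S.ρ x * (dψ x + ξa * φ x) ^ 2)
      (volume.restrict (Set.Ioo (-m) l)) := by
    refine hq.integrable_sq.bdd_mul (c := M * S.ub) (hpdm.mul hρm) ?_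
    filter_upwards [hpdb, hρb] with x h1 h2
    have hρ0 : 0 ≤ S.ρ x := le_trans S.lb_pos.le h2.1
    rw [Real.norm_eq_abs, abs_of_nonneg (mul_nonneg h1.1 hρ0)]
    exact mul_le_mul h1.2 h2.2 hρ0 hM0
  have hρ_bd : ∀ᵐ x ∂(volume.restrict (Set.Ioo (-m) l)), ‖S.ρ x‖ ≤ S.ub := by
    filter_upwards [hρb] with x h2
    rw [Real.norm_eq_abs, abs_of_nonneg (le_trans S.lb_pos.le h2.1)]; exact h2.2
  have hIB_int : Integrable (fun x => S.ρ x * (ψ x * φ x))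
      (volume.restrict (Set.Ioo (-m) l)) :=
    (l2_mul_int hA.ψ_mem hA.φ_mem).bdd_mul hρm hρ_bd
  have hIC_int : Integrable (fun x => S.ρ x * φ x ^ 2) (volume.restrict (Set.Ioo (-m) l)) :=
    hA.φ_mem.integrable_sq.bdd_mul hρm hρ_bd
  have hID_int : Integrable (fun x => S.ρ x * ψ x ^ 2) (volume.restrict (Set.Ioo (-m) l)) :=
    hA.ψ_mem.integrable_sq.bdd_mul hρm hρ_bd
  have hJ2 : (∫ x in Set.Ioo (-m) l, S.ρ x * φ x ^ 2)
      + (∫ x in Set.Ioo (-m) l, S.ρ x * ψ x ^ 2) = 2 := by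
    unfold Jen at hJ
    rw [show (fun x => S.ρ x * (φ x ^ 2 + ψ x ^ 2))
        = fun x => S.ρ x * φ x ^ 2 + S.ρ x * ψ x ^ 2 from funext fun x => by ring,
      integral_add hIC_int hID_int] at hJ
    linarith
  have hIC0 : 0 ≤ ∫ x in Set.Ioo (-m) l, S.ρ x * φ x ^ 2 := integral_nonneg_of_ae (by
    filter_upwards [hρb] with x h2
    exact mul_nonneg (le_trans S.lb_pos.le h2.1) (sq_nonneg _))
  have hID0 : 0 ≤ ∫ x in Set.Ioo (-m) l, S.ρ x * ψ x ^ 2 := integral_nonneg_of_ae (by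
    filter_upwards [hρb] with x h2
    exact mul_nonneg (le_trans S.lb_pos.le h2.1) (sq_nonneg _))
  have hIA0 : 0 ≤ ∫ x in Set.Ioo (-m) l, S.pd x * S.ρ x * (dψ x + ξa * φ x) ^ 2 :=
    integral_nonneg_of_ae (by
      filter_upwards [hpdb, hρb] with x h1 h2
      exact mul_nonneg (mul_nonneg h1.1 (le_trans S.lb_pos.le h2.1)) (sq_nonneg _))
  have hIB1 : |∫ x in Set.Ioo (-m) l, S.ρ x * (ψ x * φ x)| ≤ 1 := by
    have habs := norm_integral_le_integral_norm (μ := volume.restrict (Set.Ioo (-m) l))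
      (fun x => S.ρ x * (ψ x * φ x))
    simp only [Real.norm_eq_abs] at habs
    have hmono : (∫ x in Set.Ioo (-m) l, |S.ρ x * (ψ x * φ x)|)
        ≤ ∫ x in Set.Ioo (-m) l,
            ((1:ℝ)/2 * (S.ρ x * φ x ^ 2) + (1:ℝ)/2 * (S.ρ x * ψ x ^ 2)) := by
      refine integral_mono_ae hIB_int.abs ((hIC_int.const_mul _).add (hID_int.const_mul _)) ?_
      filter_upwards [hρb] with x h2
      have hρ0 : 0 ≤ S.ρ x := le_trans S.lb_pos.le h2.1
      rw [abs_mul, abs_of_nonneg hρ0]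
      nlinarith [sq_nonneg (|ψ x| - |φ x|), sq_abs (ψ x), sq_abs (φ x), abs_mul (ψ x) (φ x),
        abs_nonneg (ψ x * φ x), sq_nonneg (ψ x), sq_nonneg (φ x)]
    rw [integral_add (hIC_int.const_mul _) (hID_int.const_mul _),
      integral_const_mul, integral_const_mul] at hmono
    calc |∫ x in Set.Ioo (-m) l, S.ρ x * (ψ x * φ x)| ≤ _ := habs
      _ ≤ _ := hmono
      _ ≤ 1 := by linarith
  refine ⟨_, _, _, hIA0, hIB1, hIC0, by linarith, fun s => ?_⟩
  have h5 : Integrable (fun x => S.pd x * S.ρ x * (dψ x + ξa * φ x) ^ 2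
      - 2 * g * ξa * (S.ρ x * (ψ x * φ x))) (volume.restrict (Set.Ioo (-m) l)) :=
    hIA_int.sub (hIB_int.const_mul _)
  unfold Een
  rw [show (fun x => S.pd x * S.ρ x * (dψ x + ξa * φ x) ^ 2 - 2 * g * ξa * S.ρ x * ψ x * φ x
        + 4 * ω ^ 2 * s * S.ρ x * (φ x) ^ 2)
      = fun x => (S.pd x * S.ρ x * (dψ x + ξa * φ x) ^ 2
        - 2 * g * ξa * (S.ρ x * (ψ x * φ x))) + 4 * ω ^ 2 * s * (S.ρ x * φ x ^ 2)
      from funext fun x => by ring,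
    integral_add h5 (hIC_int.const_mul _),
    integral_sub hIA_int (hIB_int.const_mul _), integral_const_mul, integral_const_mul]

end Master

section Adm

variable {m l g : ℝ} {Pp Pm : PressureLaw} (S : SteadyState m l g Pp Pm)

lemma exists_adm (hm : 0 < m) (hl : 0 < l) :
    ∃ φ ψ dψ : ℝ → ℝ, MemAdm m l φ ψ dψ ∧ Jen S φ ψ = 1 := by
  set ψ₀ : ℝ → ℝ := fun x => (x + m) * (l - x) with hψ₀
  have hψ₀c : Continuous ψ₀ := by fun_prop
  have hρm := rho_aesm S hm hl
  have hρb := rho_ae_bd S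
  have hρ_bd : ∀ᵐ x ∂(volume.restrict (Set.Ioo (-m) l)), ‖S.ρ x‖ ≤ S.ub := by
    filter_upwards [hρb] with x h2
    rw [Real.norm_eq_abs, abs_of_nonneg (le_trans S.lb_pos.le h2.1)]; exact h2.2
  have hint0 : Integrable (fun x => S.ρ x * ψ₀ x ^ 2) (volume.restrict (Set.Ioo (-m) l)) :=
    ((cont_memL2 hψ₀c (-m) l).integrable_sq).bdd_mul hρm hρ_bd
  have hnn : 0 ≤ᵐ[volume.restrict (Set.Ioo (-m) l)] fun x => S.ρ x * ψ₀ x ^ 2 := by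
    filter_upwards [hρb] with x h2
    exact mul_nonneg (le_trans S.lb_pos.le h2.1) (sq_nonneg _)
  have hIpos : 0 < ∫ x in Set.Ioo (-m) l, S.ρ x * ψ₀ x ^ 2 := by
    rw [setIntegral_pos_iff_support_of_nonneg_ae hnn hint0]
    have hsub : Set.Ioo (-m) l ⊆ Function.support (fun x => S.ρ x * ψ₀ x ^ 2) := by
      intro x hx
      have h1 : 0 < x + m := by linarith [hx.1]
      have h2 : 0 < l - x := by linarith [hx.2]
      have hρ0 : 0 < S.ρ x := lt_of_lt_of_le S.lb_pos (S.bounds x hx).1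
      have : 0 < S.ρ x * ψ₀ x ^ 2 := by positivity
      exact ne_of_gt this
    calc (0:ENNReal) < volume (Set.Ioo (-m) l) := by
          rw [Real.volume_Ioo]
          exact ENNReal.ofReal_pos.mpr (by linarith)
      _ ≤ volume (Function.support (fun x => S.ρ x * ψ₀ x ^ 2) ∩ Set.Ioo (-m) l) :=
          measure_mono fun x hx => ⟨hsub hx, hx⟩
  set I := ∫ x in Set.Ioo (-m) l, S.ρ x * ψ₀ x ^ 2 with hIdef
  set c := Real.sqrt (2 / I) with hcdef
  have hc2 : c ^ 2 = 2 / I := Real.sq_sqrt (by positivity)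
  refine ⟨fun _ => 0, fun x => c * ψ₀ x, fun x => c * (1 * (l - x) + (x + m) * (-1)), ?_, ?_⟩
  · haveI : IsFiniteMeasure (volume.restrict (Set.Ioo (-m) l)) :=
      ⟨by rw [Measure.restrict_apply_univ]; exact measure_Ioo_lt_top⟩
    refine ⟨memLp_const 0, (by fun_prop : Continuous fun x => c * ψ₀ x).continuousOn,
      fun x _ => ?_, cont_memL2 (by fun_prop) _ _, cont_memL2 (by fun_prop) _ _, ?_, ?_⟩
    · have h2 : HasDerivAt (fun x : ℝ => l - x) (-1) x := (hasDerivAt_id x).const_sub l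
      have h1 : HasDerivAt (fun x : ℝ => x + m) 1 x := (hasDerivAt_id x).add_const m
      exact (h1.mul h2).const_mul c
    · show c * ((-m + m) * (l - -m)) = 0
      have : (-m + m : ℝ) = 0 := by ring
      rw [this]; ring
    · show c * ((l + m) * (l - l)) = 0
      have : (l - l : ℝ) = 0 := by ring
      rw [this]; ring
  · unfold Jen
    rw [show (fun x => S.ρ x * (((fun _ : ℝ => (0:ℝ)) x) ^ 2 + (c * ψ₀ x) ^ 2))
        = fun x => c ^ 2 * (S.ρ x * ψ₀ x ^ 2) from funext fun x => by ring,
      integral_const_mul, hc2]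
    field_simp
    exact hIdef.symm

end Adm

section Mu

variable {m l g : ℝ} {Pp Pm : PressureLaw} (S : SteadyState m l g Pp Pm)

def Kset (S : SteadyState m l g Pp Pm) (ω ξa s : ℝ) : Set ℝ :=
  {e : ℝ | ∃ φ ψ dψ : ℝ → ℝ, MemAdm m l φ ψ dψ ∧ Jen S φ ψ = 1 ∧
    e = Een S ω ξa s φ ψ dψ}

lemma muInf_eq (ω ξa s : ℝ) : muInf S ω ξa s = sInf (Kset S ω ξa s) := rfl

lemma Kset_nonempty (hm : 0 < m) (hl : 0 < l) (ω ξa s : ℝ) : (Kset S ω ξa s).Nonempty := by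
  obtain ⟨φ, ψ, dψ, hA, hJ⟩ := exists_adm S hm hl
  exact ⟨Een S ω ξa s φ ψ dψ, φ, ψ, dψ, hA, hJ, rfl⟩

lemma Kset_lb (hm : 0 < m) (hl : 0 < l) (hg : 0 < g) (ω : ℝ) {ξa s : ℝ}
    (hξ : 0 ≤ ξa) (hs : 0 ≤ s) : ∀ e ∈ Kset S ω ξa s, -(g * ξa) ≤ e := by
  rintro e ⟨φ, ψ, dψ, hA, hJ, rfl⟩
  obtain ⟨IA, IB, IC, hIA, hIB, hIC0, hIC2, hE⟩ := master S hm hl hg ω ξa hA hJ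
  rw [hE s]
  have hIB' := abs_le.mp hIB
  have h1 : 0 ≤ 4 * ω ^ 2 * s * IC := by positivity
  nlinarith [mul_nonneg (mul_nonneg hg.le hξ) (sub_nonneg.mpr hIB'.2)]

lemma muInf_lb (hm : 0 < m) (hl : 0 < l) (hg : 0 < g) (ω : ℝ) {ξa s : ℝ}
    (hξ : 0 ≤ ξa) (hs : 0 ≤ s) : -(g * ξa) ≤ muInf S ω ξa s :=
  le_csInf (Kset_nonempty S hm hl ω ξa s) (Kset_lb S hm hl hg ω hξ hs)

lemma muInf_lip (hm : 0 < m) (hl : 0 < l) (hg : 0 < g) (ω : ℝ) {ξa s s' : ℝ}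
    (hξ : 0 ≤ ξa) (hs : 0 ≤ s) (hss' : s ≤ s') :
    muInf S ω ξa s ≤ muInf S ω ξa s'
      ∧ muInf S ω ξa s' ≤ muInf S ω ξa s + 4 * ω ^ 2 * (s' - s) := by
  have hs' : 0 ≤ s' := hs.trans hss'
  have hbdd : BddBelow (Kset S ω ξa s) := ⟨-(g * ξa), Kset_lb S hm hl hg ω hξ hs⟩
  have hbdd' : BddBelow (Kset S ω ξa s') := ⟨-(g * ξa), Kset_lb S hm hl hg ω hξ hs'⟩
  constructor
  · rw [muInf_eq, muInf_eq]
    refine le_csInf (Kset_nonempty S hm hl ω ξa s') ?_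
    rintro e' ⟨φ, ψ, dψ, hA, hJ, rfl⟩
    obtain ⟨IA, IB, IC, hIA, hIB, hIC0, hIC2, hE⟩ := master S hm hl hg ω ξa hA hJ
    have hmem : Een S ω ξa s φ ψ dψ ∈ Kset S ω ξa s := ⟨φ, ψ, dψ, hA, hJ, rfl⟩
    refine (csInf_le hbdd hmem).trans ?_
    rw [hE s, hE s']
    nlinarith [mul_nonneg (mul_nonneg (by positivity : (0:ℝ) ≤ 4 * ω ^ 2)
      (sub_nonneg.mpr hss')) hIC0]
  · rw [muInf_eq, muInf_eq, ← sub_le_iff_le_add]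
    refine le_csInf (Kset_nonempty S hm hl ω ξa s) ?_
    rintro e ⟨φ, ψ, dψ, hA, hJ, rfl⟩
    obtain ⟨IA, IB, IC, hIA, hIB, hIC0, hIC2, hE⟩ := master S hm hl hg ω ξa hA hJ
    have hmem : Een S ω ξa s' φ ψ dψ ∈ Kset S ω ξa s' := ⟨φ, ψ, dψ, hA, hJ, rfl⟩
    have h1 : sInf (Kset S ω ξa s') ≤ Een S ω ξa s' φ ψ dψ := csInf_le hbdd' hmem
    have h2 : Een S ω ξa s' φ ψ dψ ≤ Een S ω ξa s φ ψ dψ + 4 * ω ^ 2 * (s' - s) := by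
      rw [hE s, hE s']
      nlinarith [mul_nonneg (by positivity : (0:ℝ) ≤ 2 * ω ^ 2) (sub_nonneg.mpr hss'),
        mul_le_mul_of_nonneg_left hIC2
          (mul_nonneg (by positivity : (0:ℝ) ≤ 2 * ω ^ 2) (sub_nonneg.mpr hss'))]
    linarith
  
lemma muInf_contOn (hm : 0 < m) (hl : 0 < l) (hg : 0 < g) (ω : ℝ) {ξa : ℝ} (hξ : 0 ≤ ξa) :
    ContinuousOn (fun s => muInf S ω ξa s) (Set.Ici 0) := by
  refine LipschitzOnWith.continuousOn (K := Real.toNNReal (4 * ω ^ 2)) ?_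
  rw [lipschitzOnWith_iff_dist_le_mul]
  intro x hx y hy
  rw [Real.dist_eq, Real.dist_eq, Real.coe_toNNReal _ (by positivity)]
  rcases le_total x y with h | h
  · obtain ⟨h1, h2⟩ := muInf_lip S hm hl hg ω hξ hx h
    rw [abs_of_nonpos (by linarith : x - y ≤ 0)]
    rw [abs_le]
    constructor <;> nlinarith
  · obtain ⟨h1, h2⟩ := muInf_lip S hm hl hg ω hξ hy h
    rw [abs_of_nonneg (by linarith : 0 ≤ x - y)]
    rw [abs_le]
    constructor <;> nlinarith

end Mu

/-- `|ξ|` for `ξ ∈ ℝ²`. -/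
noncomputable def mag (ξ : ℝ × ℝ) : ℝ := Real.sqrt (ξ.1 ^ 2 + ξ.2 ^ 2)

/-- `C₂ = max{4C₁, (R₁C₀/2)²}`. -/
noncomputable def C2of (R₁ C₀ C₁ : ℝ) : ℝ := max (4 * C₁) ((R₁ * C₀ / 2) ^ 2)

/-- `R₂ = 2C₀⁻¹√C₂`. -/
noncomputable def R2of (R₁ C₀ C₁ : ℝ) : ℝ := 2 / C₀ * Real.sqrt (C2of R₁ C₀ C₁)

/-- `s₁ = C₀R₂/C₂`. -/
noncomputable def s1of (R₁ C₀ C₁ : ℝ) : ℝ := C₀ * R2of R₁ C₀ C₁ / C2of R₁ C₀ C₁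

/-- **Theorem 2.1**: `R₂ ≥ R₁`, and for each `ξ` with `|ξ| > R₂` there exists
`s ∈ (0, s₁)` with `s = 1/λ²(|ξ|,s)`, where `λ²(|ξ|,s) = -μ(s;|ξ|) > 0`. -/
theorem fixed_point_exists
    {m l g : ℝ} (hm : 0 < m) (hl : 0 < l) (hg : 0 < g) (ω : ℝ)
    {Pp Pm : PressureLaw} (S : SteadyState m l g Pp Pm)
    (R₁ C₀ C₁ : ℝ) (hR₁ : 2 ≤ R₁) (hC₀ : 0 < C₀) (hC₁ : 0 < C₁)
    (hb : ∀ ξa s : ℝ, R₁ ≤ ξa → 0 < s → muInf S ω ξa s ≤ -(C₀ * ξa) + s * C₁) :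
    R₁ ≤ R2of R₁ C₀ C₁
    ∧ ∀ ξ : ℝ × ℝ, R2of R₁ C₀ C₁ < mag ξ →
        ∃ s : ℝ, 0 < s ∧ s < s1of R₁ C₀ C₁ ∧
          0 < -(muInf S ω (mag ξ) s) ∧ s * (-(muInf S ω (mag ξ) s)) = 1 := by
  have hC2pos : 0 < C2of R₁ C₀ C₁ :=
    lt_of_lt_of_le (by linarith) (le_max_left (4 * C₁) ((R₁ * C₀ / 2) ^ 2))
  set c := Real.sqrt (C2of R₁ C₀ C₁) with hc
  have hcpos : 0 < c := Real.sqrt_pos.mpr hC2pos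
  have hc2 : c ^ 2 = C2of R₁ C₀ C₁ := Real.sq_sqrt hC2pos.le
  have hR2 : R2of R₁ C₀ C₁ = 2 / C₀ * c := by unfold R2of; rw [← hc]
  have hR2pos : 0 < R2of R₁ C₀ C₁ := by rw [hR2]; positivity
  have hs1 : s1of R₁ C₀ C₁ = 2 / c := by
    unfold s1of
    rw [hR2, ← hc2]
    field_simp
  have hR1R2 : R₁ ≤ R2of R₁ C₀ C₁ := by
    have h1 : R₁ * C₀ / 2 ≤ c := by
      rw [hc]
      calc R₁ * C₀ / 2 = Real.sqrt ((R₁ * C₀ / 2) ^ 2) :=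
            (Real.sqrt_sq (by positivity)).symm
        _ ≤ _ := Real.sqrt_le_sqrt (le_max_right _ _)
    rw [hR2, div_mul_eq_mul_div, le_div_iff₀ hC₀]
    nlinarith
  refine ⟨hR1R2, fun ξ hξ => ?_⟩
  set ξa := mag ξ with hξad
  have hξaR2 : R2of R₁ C₀ C₁ < ξa := hξ
  have hξapos : 0 < ξa := hR2pos.trans hξaR2
  have hξaR1 : R₁ ≤ ξa := hR1R2.trans hξaR2.le
  have hξa0 : 0 ≤ ξa := hξapos.le
  set s1 := s1of R₁ C₀ C₁ with hs1d
  have hs1c : s1 = 2 / c := hs1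
  have hs1pos : 0 < s1 := by rw [hs1c]; positivity
  set ε := min (1 / (2 * g * ξa)) (s1 / 4) with hε
  have hεpos : 0 < ε := lt_min (by positivity) (by positivity)
  have hεb : ε ≤ s1 / 2 := (min_le_right _ _).trans (by linarith)
  set F : ℝ → ℝ := fun s => s * (-(muInf S ω ξa s)) with hF
  have hsub : Set.Icc ε (s1 / 2) ⊆ Set.Ici (0:ℝ) := fun x hx => le_trans hεpos.le hx.1
  have hFcont : ContinuousOn F (Set.Icc ε (s1 / 2)) := by
    rw [hF]
    exact continuousOn_id.mul ((muInf_contOn S hm hl hg ω hξa0).mono hsub).neg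
  have hFε : F ε ≤ 1 := by
    have h1 : -(muInf S ω ξa ε) ≤ g * ξa := by
      have := muInf_lb S hm hl hg ω hξa0 hεpos.le
      linarith
    have h2 : F ε ≤ ε * (g * ξa) := mul_le_mul_of_nonneg_left h1 hεpos.le
    have h3 : ε ≤ 1 / (2 * g * ξa) := min_le_left _ _
    have h4 : (1 / (2 * g * ξa)) * (g * ξa) = 1 / 2 := by field_simp
    calc F ε ≤ ε * (g * ξa) := h2
      _ ≤ (1 / (2 * g * ξa)) * (g * ξa) := mul_le_mul_of_nonneg_right h3 (by positivity)
      _ ≤ 1 := by rw [h4]; norm_num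
  have hFb : 1 ≤ F (s1 / 2) := by
    have hmu := hb ξa (s1 / 2) hξaR1 (by positivity)
    have hX : C₀ * ξa - (s1 / 2) * C₁ ≤ -(muInf S ω ξa (s1 / 2)) := by linarith
    have h4 : (s1 / 2) * (C₀ * ξa - (s1 / 2) * C₁) ≤ F (s1 / 2) :=
      mul_le_mul_of_nonneg_left hX (by positivity)
    have hC1c : C₁ ≤ c ^ 2 / 4 := by
      rw [hc2]
      have := le_max_left (4 * C₁) ((R₁ * C₀ / 2) ^ 2)
      unfold C2of
      linarith
    have hCξ : 2 * c < C₀ * ξa := by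
      have he : C₀ * R2of R₁ C₀ C₁ = 2 * c := by rw [hR2]; field_simp
      nlinarith
    have e1 : s1 / 2 = 1 / c := by rw [hs1c]; ring
    rw [e1] at h4
    have h5 : (1 / c) * (C₀ * ξa - (1 / c) * C₁) = (c * (C₀ * ξa) - C₁) / c ^ 2 := by
      field_simp
    rw [h5] at h4
    have h6 : (1:ℝ) ≤ (c * (C₀ * ξa) - C₁) / c ^ 2 := by
      rw [le_div_iff₀ (by positivity)]
      nlinarith [mul_lt_mul_of_pos_left hCξ hcpos]
    rw [e1]
    linarith
  obtain ⟨s, hsmem, hsF⟩ := intermediate_value_Icc hεb hFcont ⟨hFε, hFb⟩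
  have hspos : 0 < s := lt_of_lt_of_le hεpos hsmem.1
  have hsF' : s * (-(muInf S ω ξa s)) = 1 := hsF
  refine ⟨s, hspos, lt_of_le_of_lt hsmem.2 (by linarith), ?_, hsF'⟩
  nlinarith [hsF', hspos]
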